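/- The group with presentation ⟨ s0, s1, s2 | s0² = s1² = s2² = e, (s0 s1 s2)² = e ⟩ is isomorphic to the semidirect product ℤ² ⋊ (ℤ/2ℤ), where the nontrivial element of ℤ/2ℤ acts on ℤ² by negation (this semidirect product being the double affine Weyl group W of SL2 over a 2-dimensional local field). -/

import Mathlib

noncomputable section

/-- The relations `s0² = s1² = s2² = (s0 s1 s2)² = e` of Parshin's presentation. -/
def parshinRels : Set (FreeGroup (Fin 3)) :=
  {FreeGroup.of 0 * FreeGroup.of 0, FreeGroup.of 1 * FreeGroup.of 1,
   FreeGroup.of 2 * FreeGroup.of 2,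
   (FreeGroup.of 0 * FreeGroup.of 1 * FreeGroup.of 2) ^ 2}

/-- The inversion (negation) automorphism of `ℤ²` (written multiplicatively). -/
def negAut : MulAut (Multiplicative (ℤ × ℤ)) := MulEquiv.inv (Multiplicative (ℤ × ℤ))

lemma negAut_sq : negAut ^ 2 = 1 := by
  ext x <;> simp [negAut, pow_succ]

/-- The action of `ℤ/2ℤ` on `ℤ²` in which the nontrivial element acts by negation. -/
def negAction : Multiplicative (ZMod 2) →* MulAut (Multiplicative (ℤ × ℤ)) :=
  AddMonoidHom.toMultiplicativeLeft
    (ZMod.lift 2 ⟨zmultiplesHom _ (Additive.ofMul negAut), by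
      have : negAut ^ (2 : ℤ) = 1 := by rw [zpow_two, ← pow_two, negAut_sq]
      exact congrArg Additive.ofMul negAut_sq⟩)

/-- The double affine Weyl group of `SL₂`: the semidirect product `ℤ² ⋊ ℤ/2ℤ`,
with the nontrivial element of `ℤ/2ℤ` acting by negation. -/
abbrev Wgroup := SemidirectProduct (Multiplicative (ℤ × ℤ)) (Multiplicative (ZMod 2)) negAction

lemma negAction_one (b : Multiplicative (ℤ × ℤ)) :
    negAction (Multiplicative.ofAdd (1 : ZMod 2)) b = b⁻¹ := by
  have h : (1 : ZMod 2) = ((1:ℤ) : ZMod 2) := by decide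
  rw [show negAction (Multiplicative.ofAdd (1 : ZMod 2)) b
      = Additive.toMul ((ZMod.lift 2 ⟨zmultiplesHom _ (Additive.ofMul negAut), by
          have : negAut ^ (2 : ℤ) = 1 := by rw [zpow_two, ← pow_two, negAut_sq]
          exact congrArg Additive.ofMul negAut_sq⟩) (1 : ZMod 2)) b from rfl, h, ZMod.lift_coe]
  simp [negAut]

lemma negAction_zero (b : Multiplicative (ℤ × ℤ)) :
    negAction (Multiplicative.ofAdd (0 : ZMod 2)) b = b := by
  have h : Multiplicative.ofAdd (0 : ZMod 2) = 1 := rfl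
  rw [h, map_one]; rfl

/-- candidate images of the generators in `Wgroup` -/
def wgen : Fin 3 → Wgroup
  | 0 => ⟨1, Multiplicative.ofAdd 1⟩
  | 1 => ⟨Multiplicative.ofAdd (1, 0), Multiplicative.ofAdd 1⟩
  | 2 => ⟨Multiplicative.ofAdd (0, 1), Multiplicative.ofAdd 1⟩

lemma zmod_sq :
    Multiplicative.ofAdd (1 : ZMod 2) * Multiplicative.ofAdd (1 : ZMod 2) = 1 := by decide

lemma zmod11 : (1 : ZMod 2) + 1 = 0 := by decide
lemma zmod111 : (1 : ZMod 2) + 1 + 1 = 1 := by decide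

lemma wgen_rels : ∀ r ∈ parshinRels, FreeGroup.lift wgen r = 1 := by
  intro r hr
  rcases hr with h | h | h | h <;> subst h <;>
    · simp only [map_mul, map_pow, FreeGroup.lift_apply_of]
      apply SemidirectProduct.ext <;>
        simp [wgen, pow_two, SemidirectProduct.mul_left, SemidirectProduct.mul_right,
          zmod11, zmod111, negAction_one, negAction_zero, zmod_sq, ← ofAdd_add, Prod.ext_iff] <;>
        group

/-- the forward homomorphism -/
def phiW : PresentedGroup parshinRels →* Wgroup := PresentedGroup.toGroup wgen_rels

-- generators inside the presented group
def pa : PresentedGroup parshinRels := PresentedGroup.of 0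
def pb : PresentedGroup parshinRels := PresentedGroup.of 1
def pc : PresentedGroup parshinRels := PresentedGroup.of 2

lemma rel_one {r : FreeGroup (Fin 3)} (h : r ∈ parshinRels) :
    PresentedGroup.mk parshinRels r = 1 := by
  rw [show (1 : PresentedGroup parshinRels) = PresentedGroup.mk parshinRels 1 from rfl]
  apply QuotientGroup.eq.2
  simpa using Subgroup.subset_normalClosure h

lemma pa_sq : pa * pa = 1 := by
  have := rel_one (show FreeGroup.of 0 * FreeGroup.of 0 ∈ parshinRels from Or.inl rfl)
  simpa [pa, PresentedGroup.of] using this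

lemma pb_sq : pb * pb = 1 := by
  have := rel_one (show FreeGroup.of 1 * FreeGroup.of 1 ∈ parshinRels from
    Or.inr (Or.inl rfl))
  simpa [pb, PresentedGroup.of] using this

lemma pc_sq : pc * pc = 1 := by
  have := rel_one (show FreeGroup.of 2 * FreeGroup.of 2 ∈ parshinRels from
    Or.inr (Or.inr (Or.inl rfl)))
  simpa [pc, PresentedGroup.of] using this

lemma pabc_sq : (pa * pb * pc) ^ 2 = 1 := by
  have := rel_one
    (show (FreeGroup.of 0 * FreeGroup.of 1 * FreeGroup.of 2) ^ 2 ∈ parshinRels from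
      Or.inr (Or.inr (Or.inr rfl)))
  simpa [pa, pb, pc, PresentedGroup.of] using this

lemma pa_inv : pa⁻¹ = pa := by rw [inv_eq_iff_mul_eq_one, pa_sq]
lemma pb_inv : pb⁻¹ = pb := by rw [inv_eq_iff_mul_eq_one, pb_sq]
lemma pc_inv : pc⁻¹ = pc := by rw [inv_eq_iff_mul_eq_one, pc_sq]

lemma abc_eq : pa * pb * pc = pc * pb * pa := by
  have h := pabc_sq
  rw [pow_two, mul_eq_one_iff_eq_inv] at h
  rw [h, mul_inv_rev, mul_inv_rev, pa_inv, pb_inv, pc_inv]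
  exact (mul_assoc pc pb pa).symm

def t1 : PresentedGroup parshinRels := pb * pa
def t2 : PresentedGroup parshinRels := pc * pa

lemma key_eq : pb * pa * pc = pc * pa * pb := by
  have h : pc * (pa * pb * pc) * pc = pc * (pc * pb * pa) * pc := by rw [abc_eq]
  have hl : pc * (pa * pb * pc) * pc = pc * pa * pb := by
    simp only [mul_assoc]
    rw [pc_sq, mul_one]
  have hr : pc * (pc * pb * pa) * pc = pb * pa * pc := by
    simp only [mul_assoc]
    rw [← mul_assoc pc pc, pc_sq, one_mul]
  rw [hl, hr] at h
  exact h.symm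

lemma t_comm : Commute t1 t2 := by
  show t1 * t2 = t2 * t1
  unfold t1 t2
  calc pb * pa * (pc * pa) = (pb * pa * pc) * pa := by exact (mul_assoc _ _ _).symm
    _ = (pc * pa * pb) * pa := by rw [key_eq]
    _ = pc * pa * (pb * pa) := by exact mul_assoc _ _ _

/-- homomorphism `ℤ² →* PresentedGroup` -/
def phiN : Multiplicative (ℤ × ℤ) →* PresentedGroup parshinRels where
  toFun x := t1 ^ (x.toAdd.1) * t2 ^ (x.toAdd.2)
  map_one' := by simp
  map_mul' x y := by
    show t1 ^ (x.toAdd.1 + y.toAdd.1) * t2 ^ (x.toAdd.2 + y.toAdd.2) = _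
    rw [zpow_add, zpow_add]
    have hc : Commute (t2 ^ x.toAdd.2) (t1 ^ y.toAdd.1) := (t_comm.symm).zpow_zpow _ _
    calc t1 ^ x.toAdd.1 * t1 ^ y.toAdd.1 * (t2 ^ x.toAdd.2 * t2 ^ y.toAdd.2)
        = t1 ^ x.toAdd.1 * (t1 ^ y.toAdd.1 * t2 ^ x.toAdd.2) * t2 ^ y.toAdd.2 := by
          simp only [mul_assoc]
      _ = t1 ^ x.toAdd.1 * (t2 ^ x.toAdd.2 * t1 ^ y.toAdd.1) * t2 ^ y.toAdd.2 := by
          rw [hc.symm.eq]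
      _ = t1 ^ x.toAdd.1 * t2 ^ x.toAdd.2 * (t1 ^ y.toAdd.1 * t2 ^ y.toAdd.2) := by
          simp only [mul_assoc]

lemma pa_zsmul : (2 : ℤ) • Additive.ofMul pa = 0 := by
  have : pa ^ (2 : ℤ) = 1 := by rw [zpow_two, pa_sq]
  exact congrArg Additive.ofMul this

/-- homomorphism `ℤ/2 →* PresentedGroup` sending the generator to `pa` -/
def phiH : Multiplicative (ZMod 2) →* PresentedGroup parshinRels :=
  AddMonoidHom.toMultiplicativeLeft
    (ZMod.lift 2 ⟨zmultiplesHom _ (Additive.ofMul pa), by simpa using pa_zsmul⟩)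

lemma phiH_one : phiH (Multiplicative.ofAdd (1 : ZMod 2)) = pa := by
  have h : (1 : ZMod 2) = ((1:ℤ) : ZMod 2) := by decide
  rw [show phiH (Multiplicative.ofAdd (1 : ZMod 2))
      = Additive.toMul ((ZMod.lift 2 ⟨zmultiplesHom _ (Additive.ofMul pa), by
          simpa using pa_zsmul⟩) (1 : ZMod 2)) from rfl, h, ZMod.lift_coe]
  simp

lemma phiH_zero : phiH (Multiplicative.ofAdd (0 : ZMod 2)) = 1 := by
  have h : Multiplicative.ofAdd (0 : ZMod 2) = 1 := rfl
  rw [h, map_one]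

lemma zmod_cases (g : Multiplicative (ZMod 2)) :
    g = Multiplicative.ofAdd (0 : ZMod 2) ∨ g = Multiplicative.ofAdd (1 : ZMod 2) := by
  revert g; decide

lemma conj_t1 : pa * t1 * pa⁻¹ = t1⁻¹ := by
  rw [pa_inv]
  unfold t1
  rw [mul_inv_rev, pa_inv, pb_inv]
  calc pa * (pb * pa) * pa = pa * pb * (pa * pa) := by simp only [mul_assoc]
    _ = pa * pb := by rw [pa_sq, mul_one]

lemma conj_t2 : pa * t2 * pa⁻¹ = t2⁻¹ := by
  rw [pa_inv]
  unfold t2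
  rw [mul_inv_rev, pa_inv, pc_inv]
  calc pa * (pc * pa) * pa = pa * pc * (pa * pa) := by simp only [mul_assoc]
    _ = pa * pc := by rw [pa_sq, mul_one]

lemma compat : ∀ g : Multiplicative (ZMod 2),
    phiN.comp (negAction g).toMonoidHom
      = (MulAut.conj (phiH g)).toMonoidHom.comp phiN := by
  intro g
  rcases zmod_cases g with h | h <;> subst h <;> refine MonoidHom.ext fun n => ?_
  · simp only [MonoidHom.comp_apply, MulEquiv.coe_toMonoidHom, MulAut.conj_apply,
      negAction_zero, phiH_zero, one_mul, inv_one, mul_one]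
  · simp only [MonoidHom.comp_apply, MulEquiv.coe_toMonoidHom, MulAut.conj_apply,
      negAction_one, phiH_one, map_inv]
    have e1 : (MulAut.conj pa) (phiN n) = (phiN n)⁻¹ := by
      show pa * phiN n * pa⁻¹ = (phiN n)⁻¹
      have : pa * phiN n * pa⁻¹ = (MulAut.conj pa) (t1 ^ n.toAdd.1) *
          (MulAut.conj pa) (t2 ^ n.toAdd.2) := by
        simp [phiN, MulAut.conj_apply]
      rw [this, map_zpow, map_zpow]
      have h1 : (MulAut.conj pa) t1 = t1⁻¹ := conj_t1
      have h2 : (MulAut.conj pa) t2 = t2⁻¹ := conj_t2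
      rw [h1, h2, inv_zpow, inv_zpow]
      show (t1 ^ n.toAdd.1)⁻¹ * (t2 ^ n.toAdd.2)⁻¹ = (t1 ^ n.toAdd.1 * t2 ^ n.toAdd.2)⁻¹
      rw [mul_inv_rev]
      exact ((t_comm.zpow_zpow n.toAdd.1 n.toAdd.2).inv_inv).eq
    rw [← e1]
    rfl

/-- the backward homomorphism -/
def psiW : Wgroup →* PresentedGroup parshinRels := SemidirectProduct.lift phiN phiH compat

lemma phiN_e1 : phiN (Multiplicative.ofAdd ((1 : ℤ), (0 : ℤ))) = t1 := by
  show t1 ^ (1 : ℤ) * t2 ^ (0 : ℤ) = t1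
  rw [zpow_one, zpow_zero, mul_one]

lemma phiN_e2 : phiN (Multiplicative.ofAdd ((0 : ℤ), (1 : ℤ))) = t2 := by
  show t1 ^ (0 : ℤ) * t2 ^ (1 : ℤ) = t2
  rw [zpow_one, zpow_zero, one_mul]

lemma phiW_of (i : Fin 3) : phiW (PresentedGroup.of i) = wgen i :=
  PresentedGroup.toGroup.of wgen_rels

lemma phiW_t1 : phiW t1 = SemidirectProduct.inl (Multiplicative.ofAdd ((1:ℤ), (0:ℤ))) := by
  unfold t1 pa pb
  rw [map_mul, phiW_of, phiW_of]
  apply SemidirectProduct.ext <;>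
    simp [wgen, SemidirectProduct.mul_left, SemidirectProduct.mul_right,
      negAction_one, zmod_sq]

lemma phiW_t2 : phiW t2 = SemidirectProduct.inl (Multiplicative.ofAdd ((0:ℤ), (1:ℤ))) := by
  unfold t2 pa pc
  rw [map_mul, phiW_of, phiW_of]
  apply SemidirectProduct.ext <;>
    simp [wgen, SemidirectProduct.mul_left, SemidirectProduct.mul_right,
      negAction_one, zmod_sq]

lemma phiW_phiN (n : Multiplicative (ℤ × ℤ)) : phiW (phiN n) = SemidirectProduct.inl n := by
  show phiW (t1 ^ n.toAdd.1 * t2 ^ n.toAdd.2) = _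
  rw [map_mul, map_zpow, map_zpow, phiW_t1, phiW_t2,
    ← map_zpow (SemidirectProduct.inl : Multiplicative (ℤ × ℤ) →* Wgroup),
    ← map_zpow (SemidirectProduct.inl : Multiplicative (ℤ × ℤ) →* Wgroup),
    ← map_mul]
  congr 1
  apply Multiplicative.toAdd.injective
  simp only [toAdd_mul, toAdd_zpow, toAdd_ofAdd]
  simp [Prod.ext_iff]

lemma phiW_phiH (g : Multiplicative (ZMod 2)) : phiW (phiH g) = SemidirectProduct.inr g := by
  rcases zmod_cases g with h | h <;> subst h
  · rw [phiH_zero, map_one]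
    have : Multiplicative.ofAdd (0 : ZMod 2) = 1 := rfl
    rw [this, map_one]
  · rw [phiH_one]
    show phiW (PresentedGroup.of 0) = _
    rw [phiW_of]
    apply SemidirectProduct.ext <;> simp [wgen]

lemma psiW_phiW : psiW.comp phiW = MonoidHom.id _ := by
  apply PresentedGroup.ext
  intro i
  rw [MonoidHom.comp_apply, MonoidHom.id_apply]
  show psiW (phiW (PresentedGroup.of i)) = PresentedGroup.of i
  rw [phiW_of]
  fin_cases i
  · show psiW (wgen 0) = pa
    have : wgen 0 = SemidirectProduct.inr (Multiplicative.ofAdd (1 : ZMod 2)) := rfl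
    rw [this, psiW, SemidirectProduct.lift_inr, phiH_one]
  · show psiW (wgen 1) = pb
    have : wgen 1 = SemidirectProduct.inl (Multiplicative.ofAdd ((1:ℤ), (0:ℤ)))
        * SemidirectProduct.inr (Multiplicative.ofAdd (1 : ZMod 2)) := by
      apply SemidirectProduct.ext <;>
        simp [wgen, SemidirectProduct.mul_left, SemidirectProduct.mul_right, negAction_one]
    rw [this, map_mul, psiW, SemidirectProduct.lift_inl, SemidirectProduct.lift_inr,
      phiN_e1, phiH_one]
    unfold t1
    rw [mul_assoc, pa_sq, mul_one]
  · show psiW (wgen 2) = pc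
    have : wgen 2 = SemidirectProduct.inl (Multiplicative.ofAdd ((0:ℤ), (1:ℤ)))
        * SemidirectProduct.inr (Multiplicative.ofAdd (1 : ZMod 2)) := by
      apply SemidirectProduct.ext <;>
        simp [wgen, SemidirectProduct.mul_left, SemidirectProduct.mul_right, negAction_one]
    rw [this, map_mul, psiW, SemidirectProduct.lift_inl, SemidirectProduct.lift_inr,
      phiN_e2, phiH_one]
    unfold t2
    rw [mul_assoc, pa_sq, mul_one]

lemma phiW_psiW (w : Wgroup) : phiW (psiW w) = w := by
  rw [← SemidirectProduct.inl_left_mul_inr_right w, map_mul, map_mul]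
  rw [show psiW (SemidirectProduct.inl w.left) = phiN w.left from
    SemidirectProduct.lift_inl _ _ _ _]
  rw [show psiW (SemidirectProduct.inr w.right) = phiH w.right from
    SemidirectProduct.lift_inr _ _ _ _]
  rw [phiW_phiN, phiW_phiH]

/-- Parshin's presentation: `⟨s0,s1,s2 | s0² = s1² = s2² = (s0s1s2)² = e⟩ ≅ ℤ² ⋊ ℤ/2ℤ`. -/
theorem parshin_presentation : Nonempty (PresentedGroup parshinRels ≃* Wgroup) := by
  exact ⟨{ toFun := phiW, invFun := psiW, map_mul' := map_mul phiW,
           left_inv := fun x => DFunLike.congr_fun psiW_phiW x,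
           right_inv := phiW_psiW }⟩
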